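/- Let (X, ν) be a probability space, T a totally ergodic invertible measure-preserving transformation of (X, ν), k a nonzero integer, and J a Markov operator on L²(X, ν). If J = J ∘ T̂^k, then J = Θ. -/

import Mathlib

open MeasureTheory Filter
open scoped RealInnerProductSpace ENNReal

noncomputable section

variable {X : Type*} [MeasurableSpace X]

/-- The constant function `1` as an element of `L²(X, ν)`. -/
def oneL2 (ν : Measure X) [IsProbabilityMeasure ν] : Lp ℝ 2 ν :=
  Lp.const 2 ν (1 : ℝ)

/-- `J` is a Markov operator on `L²(X, ν)`: it is positivity preserving,
`J 1 = 1` and `J* 1 = 1`. -/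
structure IsMarkov (ν : Measure X) [IsProbabilityMeasure ν]
    (J : Lp ℝ 2 ν →L[ℝ] Lp ℝ 2 ν) : Prop where
  pos : ∀ f : Lp ℝ 2 ν, 0 ≤ f → 0 ≤ J f
  map_one : J (oneL2 ν) = oneL2 ν
  adjoint_map_one : (ContinuousLinearMap.adjoint J) (oneL2 ν) = oneL2 ν

/-- `Θ`, the orthogonal projection of `L²(X, ν)` onto the constants:
`Θ f = (∫ f dν) • 1 = ⟪1, f⟫ • 1`. -/
def Theta (ν : Measure X) [IsProbabilityMeasure ν] : Lp ℝ 2 ν →L[ℝ] Lp ℝ 2 ν :=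
  (innerSL ℝ (oneL2 ν)).smulRight (oneL2 ν)

/-- The Koopman operator `f ↦ f ∘ T` on `L²(X, ν)` of a measure-preserving map `T`. -/
def koopman (ν : Measure X) [IsProbabilityMeasure ν] {T : X → X}
    (hT : MeasurePreserving T ν ν) : Lp ℝ 2 ν →L[ℝ] Lp ℝ 2 ν where
  toFun := Lp.compMeasurePreserving T hT
  map_add' := map_add _
  map_smul' := by
    intro c g
    refine Lp.ext ?_
    have h1 := Lp.coeFn_compMeasurePreserving (μ := ν) (c • g) hT
    have h2 := (Lp.coeFn_smul c g).comp_tendsto hT.quasiMeasurePreserving.tendsto_ae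
    have h3 := Lp.coeFn_smul c (Lp.compMeasurePreserving T hT g)
    have h4 := Lp.coeFn_compMeasurePreserving (μ := ν) g hT
    filter_upwards [h1, h2, h3, h4] with x e1 e2 e3 e4
    simp only [Function.comp_apply, Pi.smul_apply, RingHom.id_apply] at *
    rw [e1, e2, e3, e4]
  cont := (Lp.isometry_compMeasurePreserving hT).continuous

/-- The map `T^i` for `i : ℤ`, where `T` is an invertible (bi-measurable) map. -/
def mpowZ (T : X ≃ᵐ X) : ℤ → X → X
  | Int.ofNat n => (⇑T)^[n]
  | Int.negSucc n => (⇑T.symm)^[n + 1]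

/-- `T` is totally ergodic: all nonzero powers of `T` are ergodic. -/
def TotallyErgodic (ν : Measure X) (T : X ≃ᵐ X) : Prop :=
  ∀ i : ℤ, i ≠ 0 → Ergodic (mpowZ T i) ν

/-- The Koopman operator of the power `T^i`, `i : ℤ`, of an invertible
measure-preserving transformation `T`. -/
def koopmanZ (ν : Measure X) [IsProbabilityMeasure ν] (T : X ≃ᵐ X)
    (hT : MeasurePreserving T ν ν) : ℤ → (Lp ℝ 2 ν →L[ℝ] Lp ℝ 2 ν)
  | Int.ofNat n => (koopman ν hT) ^ n
  | Int.negSucc n => (koopman ν (hT.symm T)) ^ (n + 1)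

/-! Since `J ∘ K = J` for the Koopman operator `K` of `T^k`, `J` is constant along the Birkhoff
averages of any `f` under `K`; by the mean ergodic theorem these converge to the projection of `f`
onto the fixed vectors of `K`. Ergodicity of `T^k` makes the fixed vectors the constants, so
`J f = J (Θ f) = ⟪1, f⟫ • J 1 = Θ f`. -/

namespace ContinuousLinearMap

open scoped InnerProductSpace

variable {𝕜 E F : Type*} [RCLike 𝕜] [NormedAddCommGroup E] [InnerProductSpace 𝕜 E]
  [CompleteSpace E] [AddCommGroup F] [Module 𝕜 F] [TopologicalSpace F] [T2Space F]

theorem map_starProjection_eqLocus_of_comp_eq {K : E →L[𝕜] E} (hK : ‖K‖ ≤ 1)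
    {J : E →L[𝕜] F} (hJK : J ∘L K = J) (x : E) :
    J ((K.eqLocus (1 : E →L[𝕜] E)).starProjection x) = J x := by
  have hJ_avg : ∀ᶠ N in atTop, J x = J (birkhoffAverage 𝕜 K _root_.id N x) := by
    filter_upwards [eventually_ne_atTop 0] with N hN
    have hinv : (J ∘ _root_.id) ∘ K = J ∘ _root_.id := congrArg DFunLike.coe hJK
    rw [map_birkhoffAverage 𝕜 𝕜, birkhoffAverage_of_comp_eq 𝕜 hinv (Nat.cast_ne_zero.2 hN)]
    rfl
  exact tendsto_nhds_unique ((J.continuous.tendsto _).comp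
    (K.tendsto_birkhoffAverage_orthogonalProjection hK x)) (tendsto_const_nhds.congr' hJ_avg)

theorem apply_eq_inner_smul_of_eqLocus_eq_span {K : E →L[𝕜] E} (hK : ‖K‖ ≤ 1)
    {J : E →L[𝕜] F} (hJK : J ∘L K = J) {u : E} (hu : ‖u‖ = 1)
    (hfix : K.eqLocus (1 : E →L[𝕜] E) = 𝕜 ∙ u) (x : E) : J x = ⟪u, x⟫_𝕜 • J u := by
  have hproj : (K.eqLocus (1 : E →L[𝕜] E)).starProjection = (𝕜 ∙ u).starProjection := by
    congr!
  rw [← map_starProjection_eqLocus_of_comp_eq hK hJK, hproj,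
    Submodule.starProjection_unit_singleton 𝕜 hu, map_smul]

end ContinuousLinearMap

theorem measurePreserving_mpowZ {ν : Measure X} {T : X ≃ᵐ X} (hT : MeasurePreserving T ν ν) :
    ∀ i : ℤ, MeasurePreserving (mpowZ T i) ν ν
  | Int.ofNat n => hT.iterate n
  | Int.negSucc n => (hT.symm T).iterate (n + 1)

section Koopman

variable {ν : Measure X} [IsProbabilityMeasure ν]

variable (ν) in
theorem norm_oneL2 : ‖oneL2 ν‖ = 1 := by
  simp [oneL2, Lp.norm_const]

theorem eq_smul_oneL2_of_ae_eq_const {g : Lp ℝ 2 ν} {c : ℝ} (hg : g =ᵐ[ν] fun _ => c) :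
    g = c • oneL2 ν := by
  have hconst : c • oneL2 ν = Lp.const 2 ν c := by
    simpa [oneL2] using ((Lp.constₗ 2 ν ℝ).map_smul c (1 : ℝ)).symm
  rw [hconst]
  exact Lp.ext (hg.trans (Lp.coeFn_const 2 ν c).symm)

theorem Theta_apply (f : Lp ℝ 2 ν) : Theta ν f = ⟪oneL2 ν, f⟫ • oneL2 ν := rfl

theorem koopman_pow {T : X → X} (hT : MeasurePreserving T ν ν) (n : ℕ) :
    koopman ν hT ^ n = koopman ν (hT.iterate n) := by
  ext1 g
  rw [FunLike.coe_pow_eq_iterate]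
  exact congrFun (Lp.compMeasurePreserving_iterate hT n) g

theorem koopmanZ_eq_koopman {T : X ≃ᵐ X} (hT : MeasurePreserving T ν ν) :
    ∀ i : ℤ, koopmanZ ν T hT i = koopman ν (measurePreserving_mpowZ hT i)
  | Int.ofNat n => koopman_pow hT n
  | Int.negSucc n => koopman_pow (hT.symm T) (n + 1)

variable {S : X → X}

theorem norm_koopman_le_one (hS : MeasurePreserving S ν ν) : ‖koopman ν hS‖ ≤ 1 :=
  ContinuousLinearMap.opNorm_le_bound _ zero_le_one fun g => by
    rw [one_mul]
    exact (Lp.norm_compMeasurePreserving g hS).le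

theorem koopman_oneL2 (hS : MeasurePreserving S ν ν) : koopman ν hS (oneL2 ν) = oneL2 ν := by
  refine (eq_smul_oneL2_of_ae_eq_const ?_).trans (one_smul ℝ _)
  have hone : oneL2 ν =ᵐ[ν] fun _ => (1 : ℝ) := Lp.coeFn_const 2 ν 1
  exact (Lp.coeFn_compMeasurePreserving _ hS).trans
    (hone.comp_tendsto hS.quasiMeasurePreserving.tendsto_ae)

theorem eqLocus_koopman_eq_span_oneL2 (hS : Ergodic S ν) :
    (koopman ν hS.toMeasurePreserving).eqLocus 1 = ℝ ∙ oneL2 ν := by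
  ext g
  rw [LinearMap.mem_eqLocus, Submodule.mem_span_singleton]
  constructor
  · intro hfix
    have hinv : g ∘ S =ᵐ[ν] g := by
      have hcomp := Lp.coeFn_compMeasurePreserving g hS.toMeasurePreserving
      rw [show Lp.compMeasurePreserving S _ g = g from hfix] at hcomp
      exact hcomp.symm
    obtain ⟨c, hc⟩ := hS.ae_eq_const_of_ae_eq_comp_ae (Lp.aestronglyMeasurable g) hinv
    exact ⟨c, (eq_smul_oneL2_of_ae_eq_const hc).symm⟩
  · rintro ⟨c, rfl⟩
    rw [map_smul, ContinuousLinearMap.coe_coe, koopman_oneL2]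
    rfl

end Koopman

/-- If `T` is totally ergodic, `k ≠ 0` and `J` is a Markov operator with
`J = J ∘ T̂^k`, then `J = Θ`. -/
theorem markov_fixed_power_of_totallyErgodic {X : Type*} [MeasurableSpace X]
    (ν : Measure X) [IsProbabilityMeasure ν]
    (T : X ≃ᵐ X) (hT : MeasurePreserving (⇑T) ν ν) (hTte : TotallyErgodic ν T)
    (k : ℤ) (hk : k ≠ 0)
    (J : Lp ℝ 2 ν →L[ℝ] Lp ℝ 2 ν) (hJ : IsMarkov ν J)
    (h : J = J ∘L koopmanZ ν T hT k) : J = Theta ν := by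
  have hS : Ergodic (mpowZ T k) ν := hTte k hk
  rw [koopmanZ_eq_koopman hT k] at h
  ext1 f
  rw [ContinuousLinearMap.apply_eq_inner_smul_of_eqLocus_eq_span (norm_koopman_le_one _) h.symm
    (norm_oneL2 ν) (eqLocus_koopman_eq_span_oneL2 hS) f, hJ.map_one, Theta_apply]
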